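/- arXiv:1008.2055 — 4 statements merged into one kernel-verified Lean document; each statement's English description precedes it below -/
import Mathlib

section
/- If $r$ is a prime and $G$ is a nontrivial finite abelian group, then $\mathrm{Prob}_r(G) = 1/r^k$ for some integer $k \geq 0$. -/
/-! The image of `g ↦ g ^ r` is isomorphic to `G` modulo the kernel, and every element of the
kernel has order dividing `r`, so the kernel is an `r`-group: its order is `r ^ k`, and the
proportion of `r`-th powers is `1 / r ^ k`. -/

theorem MonoidHom.card_ker_mul_card_range {G G' : Type*} [Group G] [Group G'] (f : G →* G') :
    Nat.card f.ker * Nat.card f.range = Nat.card G := by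
  rw [← Subgroup.index_ker, Subgroup.card_mul_index]

theorem isPGroup_ker_powMonoidHom {G : Type*} [CommGroup G] (p : ℕ) :
    IsPGroup p (powMonoidHom p : G →* G).ker :=
  fun g => ⟨1, Subtype.ext (by simpa using (MonoidHom.mem_ker.mp g.2 : g.1 ^ p = 1))⟩

theorem ncard_setOf_pow_eq_card_range {G : Type*} [CommGroup G] (n : ℕ) :
    {x : G | ∃ g : G, g ^ n = x}.ncard = Nat.card (powMonoidHom n : G →* G).range := by
  rw [← Nat.card_coe_set_eq]
  rfl

theorem stmt_3_general (G : Type*) [CommGroup G] [Fintype G] (r : ℕ) (hr : r.Prime) :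
    ∃ k : ℕ, (Set.ncard {x : G | ∃ g : G, g ^ r = x} : ℝ) / (Nat.card G : ℝ) =
      1 / (r : ℝ) ^ k := by
  have : Fact r.Prime := ⟨hr⟩
  obtain ⟨k, hk⟩ := (isPGroup_ker_powMonoidHom (G := G) r).exists_card_eq
  refine ⟨k, ?_⟩
  have hrange : 0 < Nat.card (powMonoidHom r : G →* G).range := Nat.card_pos
  rw [ncard_setOf_pow_eq_card_range, ← (powMonoidHom r : G →* G).card_ker_mul_card_range, hk]
  push_cast
  field_simp

theorem stmt_3 (G : Type*) [CommGroup G] [Fintype G] [Nontrivial G] (r : ℕ) (hr : r.Prime) :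
    ∃ k : ℕ, (Set.ncard {x : G | ∃ g : G, g ^ r = x} : ℝ) / (Nat.card G : ℝ) =
      1 / (r : ℝ) ^ k :=
  stmt_3_general G r hr
end

section
/- Let $G$ be a finite group, $r \geq 2$, and $a \in G$. The number of solutions $x \in G$ of the equation $x^r = a$ is a multiple of $\gcd(r, |C_G(a)|)$, where $C_G(a)$ is the centralizer of $a$ in $G$. -/
/-!
Write `N(n, a)` (`rootCount n a`) for the number of `n`-th roots of `a`. Every root of `a`
commutes with `a`, so one may pass to `C_G(a)` and assume that `a` is central. Grouping the
roots `x` of `x ^ (m * n) = a` by `y = x ^ m` gives `N(m * n, a) = ∑_{y ^ n = a} N(m, y)`, a sum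
of a class function over a union of conjugacy classes; the class of `y` has `|G : C_G(y)|`
elements, so it contributes a multiple of `gcd(m, |G|)` as soon as `gcd(m, |C_G(y)|)` divides
`N(m, y)`. Hence the statement is multiplicative over coprime factors of `r`, and it suffices to
treat `r = p ^ k`.

For central `a`, multiplying by a `p ^ k`-th power of a power of `a` replaces `a` by a
`p`-element `c`. If `c ≠ 1`, the roots of `c` fall into blocks of size `p ^ k` according to the
cyclic subgroup they generate. If `c = 1`, everything rests on Frobenius' theorem that the
`p`-part of `|G|` divides the number of `p`-elements; it is proved by induction on `|G|`, sorting
the elements of `G` by their `p'`-parts and applying the class-sum argument, where the central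
`p'`-parts are counted by Cauchy's theorem.
-/

open Finset MulAction Subgroup
open scoped IsMulCommutative

universe u

noncomputable def rootCount {G : Type*} [Group G] (n : ℕ) (a : G) : ℕ :=
  Nat.card {x : G // x ^ n = a}

section RootCount

variable {G : Type*} [Group G]

theorem rootCount_conj (n : ℕ) (g a : G) : rootCount n (g * a * g⁻¹) = rootCount n a :=
  Nat.card_congr ((MulAut.conj g).toEquiv.subtypeEquiv fun x => by simp [conj_pow]).symm

theorem rootCount_mul_pow_of_mem_center {b : G} (hb : b ∈ center G) (n : ℕ) (a : G) :
    rootCount n (a * b ^ n) = rootCount n a :=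
  Nat.card_congr ((Equiv.mulRight b).subtypeEquiv fun x => by
    rw [Equiv.coe_mulRight, Commute.mul_pow (mem_center_iff.mp hb x), mul_left_inj]).symm

theorem rootCount_eq_rootCount_one_of_coprime {a : G} (ha : a ∈ center G) {n : ℕ}
    (hn : n.Coprime (orderOf a)) : rootCount n a = rootCount n (1 : G) := by
  obtain ⟨m, hm⟩ := exists_pow_eq_self_of_coprime hn
  rw [← rootCount_mul_pow_of_mem_center ((center G).pow_mem ha m) n 1, one_mul, ← pow_mul,
    mul_comm, pow_mul, hm]

theorem rootCount_mk (H : Subgroup G) {a : G} (ha : a ∈ H) (n : ℕ) :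
    rootCount n (⟨a, ha⟩ : H) = Nat.card {x : G // x ∈ H ∧ x ^ n = a} :=
  Nat.card_congr
    { toFun x := ⟨x.1, x.1.2, congrArg Subtype.val x.2⟩
      invFun x := ⟨⟨x.1, x.2.1⟩, Subtype.ext x.2.2⟩
      left_inv _ := rfl
      right_inv _ := rfl }

theorem rootCount_centralizer_mk (n : ℕ) (a : G) :
    rootCount n (⟨a, mem_centralizer_singleton_iff.mpr rfl⟩ : centralizer {a}) =
      rootCount n a := by
  rw [rootCount_mk]
  refine Nat.card_congr (Equiv.subtypeEquivRight fun x => and_iff_right_of_imp ?_)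
  rintro rfl
  exact mem_centralizer_singleton_iff.mpr (Commute.self_pow x n).eq

theorem mk_mem_center_centralizer (a : G) :
    (⟨a, mem_centralizer_singleton_iff.mpr rfl⟩ : centralizer {a}) ∈ center (centralizer {a}) :=
  mem_center_iff.mpr fun g => Subtype.ext (mem_centralizer_singleton_iff.mp g.2)

theorem rootCount_mul_eq_sum [Fintype G] [DecidableEq G] (m n : ℕ) (a : G) :
    rootCount (m * n) a = ∑ y with y ^ n = a, rootCount m y := by
  simp only [rootCount, Nat.card_eq_fintype_card, Fintype.card_subtype]
  rw [card_eq_sum_card_fiberwise (f := (· ^ m)) (t := {y | y ^ n = a}) fun x hx => by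
    simp_all [pow_mul]]
  refine sum_congr rfl fun y hy => congrArg card ?_
  rw [filter_filter]
  refine filter_congr fun x _ => ⟨And.right, fun hx => ⟨?_, hx⟩⟩
  rw [pow_mul, hx, (mem_filter.mp hy).2]

theorem rootCount_one_eq_card_ker {A : Type*} [CommGroup A] (n : ℕ) :
    rootCount n (1 : A) = Nat.card (powMonoidHom n : A →* A).ker :=
  Nat.card_congr (Equiv.subtypeEquivRight fun _ => by simp)

theorem rootCount_pow_zpowers [Finite G] (x : G) (n : ℕ) :
    rootCount n (⟨x ^ n, pow_mem (mem_zpowers x) n⟩ : zpowers x) = (orderOf x).gcd n := by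
  have hx : (⟨x, mem_zpowers x⟩ : zpowers x) ∈ center (zpowers x) :=
    mem_center_iff.mpr fun g => mul_comm g _
  have hxn : (⟨x ^ n, pow_mem (mem_zpowers x) n⟩ : zpowers x) = 1 * ⟨x, mem_zpowers x⟩ ^ n := by
    rw [one_mul]
    rfl
  rw [hxn, rootCount_mul_pow_of_mem_center hx, rootCount_one_eq_card_ker,
    IsCyclic.card_powMonoidHom_ker, Nat.card_zpowers]

end RootCount

theorem dvd_sum_of_dvd_card_orbit_mul {M X : Type*} [Group M] [MulAction M X] [Fintype X]
    {f : X → ℕ} (hf : ∀ (g : M) (x : X), f (g • x) = f x) {d : ℕ}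
    (hd : ∀ x, d ∣ Nat.card (orbit M x) * f x) : d ∣ ∑ x, f x := by
  classical
  rw [Fintype.sum_equiv (selfEquivSigmaOrbits M X) f (fun σ => f σ.2) fun _ => rfl,
    Fintype.sum_sigma]
  refine dvd_sum fun ω _ => ?_
  have hconst : ∀ y : orbit M ω.out, f y = f ω.out := by
    rintro ⟨_, g, rfl⟩
    exact hf g _
  rw [sum_congr rfl fun y _ => hconst y, sum_const, card_univ, smul_eq_mul,
    ← Nat.card_eq_fintype_card]
  exact hd _

theorem Nat.gcd_mul_dvd_mul_gcd' (m a b : ℕ) : m.gcd (a * b) ∣ a * m.gcd b :=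
  (Nat.gcd_dvd_gcd_of_dvd_left _ (dvd_mul_left m a)).trans (dvd_of_eq (Nat.gcd_mul_left a m b))

section ClassSum

variable {G : Type*} [Group G]

theorem card_orbit_conjAct_mul_card_centralizer (y : G) :
    Nat.card (orbit (ConjAct G) y) * Nat.card (centralizer {y}) = Nat.card G := by
  rw [nat_card_centralizer_nat_card_stabilizer, Nat.card_coe_set_eq, ← index_stabilizer,
    index_mul_card]
  exact Nat.card_congr ConjAct.toConjAct.toEquiv.symm

theorem gcd_card_dvd_sum_rootCount [Fintype G] {m : ℕ} (S : Finset G)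
    (hS : ∀ g, ∀ y ∈ S, g * y * g⁻¹ ∈ S)
    (hm : ∀ y ∈ S, m.gcd (Nat.card (centralizer {y})) ∣ rootCount m y) :
    m.gcd (Nat.card G) ∣ ∑ y ∈ S, rootCount m y := by
  classical
  have hS' : ∀ (g : ConjAct G) y, g • y ∈ S ↔ y ∈ S := fun g y => by
    refine ⟨fun h => ?_, hS _ y⟩
    simpa [ConjAct.smul_def, mul_assoc] using hS (ConjAct.ofConjAct g)⁻¹ _ h
  rw [← Fintype.sum_ite_mem]
  refine dvd_sum_of_dvd_card_orbit_mul (M := ConjAct G) (fun g y => ?_) fun y => ?_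
  · simp only [hS']
    simp only [ConjAct.smul_def, rootCount_conj]
  · split_ifs with hy
    · rw [← card_orbit_conjAct_mul_card_centralizer y]
      exact (Nat.gcd_mul_dvd_mul_gcd' _ _ _).trans (mul_dvd_mul_left _ (hm y hy))
    · exact dvd_zero _

theorem gcd_card_dvd_rootCount_mul_of_mem_center [Finite G] {m : ℕ}
    (hm : ∀ y : G, m.gcd (Nat.card (centralizer {y})) ∣ rootCount m y) (n : ℕ) {a : G}
    (ha : a ∈ center G) : m.gcd (Nat.card G) ∣ rootCount (m * n) a := by
  classical
  have := Fintype.ofFinite G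
  rw [rootCount_mul_eq_sum]
  refine gcd_card_dvd_sum_rootCount _ (fun g y hy => ?_) fun y _ => hm y
  simp only [mem_filter, mem_univ, true_and] at hy ⊢
  rw [conj_pow, hy, mem_center_iff.mp ha g, mul_inv_cancel_right]

end ClassSum

theorem gcd_card_centralizer_dvd_rootCount_of_forall_mem_center {G : Type u} [Group G] [Finite G]
    {n : ℕ} (h : ∀ (H : Type u) [Group H] [Finite H] (b : H), b ∈ center H →
      n.gcd (Nat.card H) ∣ rootCount n b) (a : G) :
    n.gcd (Nat.card (centralizer {a})) ∣ rootCount n a := by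
  rw [← rootCount_centralizer_mk]
  exact h _ _ (mk_mem_center_centralizer a)

section PrimePower

variable {G : Type*} [Group G] {p : ℕ} [hp : Fact p.Prime]

theorem orderOf_eq_prime_pow_of_pow_eq {k e : ℕ} {x c : G} (hx : x ^ p ^ k = c)
    (hc : orderOf c = p ^ (e + 1)) : orderOf x = p ^ (k + e + 1) := by
  refine orderOf_eq_prime_pow (fun h => ?_) ?_
  · have := orderOf_dvd_of_pow_eq_one (by rwa [pow_add, pow_mul, hx] at h)
    rw [hc, Nat.pow_dvd_pow_iff_le_right hp.out.one_lt] at this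
    omega
  · rw [add_assoc, pow_add, pow_mul, hx, ← hc, pow_orderOf_eq_one]

theorem card_pow_eq_and_zpowers_eq [Finite G] {k e : ℕ} {c x₀ : G} (hc : orderOf c = p ^ (e + 1))
    (hx₀ : x₀ ^ p ^ k = c) :
    Nat.card {y : G // y ^ p ^ k = c ∧ zpowers y = zpowers x₀} = p ^ k := by
  have hord {y : G} (hy : y ^ p ^ k = c) : orderOf y = p ^ (k + e + 1) :=
    orderOf_eq_prime_pow_of_pow_eq hy hc
  calc Nat.card {y : G // y ^ p ^ k = c ∧ zpowers y = zpowers x₀}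
      = Nat.card {y : G // y ∈ zpowers x₀ ∧ y ^ p ^ k = x₀ ^ p ^ k} := by
        refine Nat.card_congr (Equiv.subtypeEquivRight fun y => ?_)
        rw [hx₀]
        refine ⟨fun ⟨hy, h⟩ => ⟨h ▸ mem_zpowers y, hy⟩, fun ⟨h, hy⟩ => ⟨hy, ?_⟩⟩
        refine eq_of_le_of_card_ge (zpowers_le.mpr h) ?_
        rw [Nat.card_zpowers, Nat.card_zpowers, hord hy, hord hx₀]
    _ = (orderOf x₀).gcd (p ^ k) := by
        rw [← rootCount_mk _ (pow_mem (mem_zpowers x₀) _), rootCount_pow_zpowers]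
    _ = p ^ k := by
        rw [hord hx₀]
        exact Nat.gcd_eq_right (pow_dvd_pow p (by omega))

theorem prime_pow_dvd_rootCount [Finite G] (k : ℕ) {c : G} (hc : c ≠ 1) {E : ℕ}
    (hcE : c ^ p ^ E = 1) : p ^ k ∣ rootCount (p ^ k) c := by
  classical
  have := Fintype.ofFinite G
  obtain ⟨_ | e, -, he⟩ := (Nat.dvd_prime_pow hp.out).mp (orderOf_dvd_of_pow_eq_one hcE)
  · exact absurd (orderOf_eq_one_iff.mp (by simpa using he)) hc
  rw [rootCount, Nat.card_eq_fintype_card, Fintype.card_subtype,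
    card_eq_sum_card_image (fun y => zpowers y)]
  refine dvd_sum fun H hH => ?_
  obtain ⟨x₀, hx₀, rfl⟩ := mem_image.mp hH
  rw [filter_filter, ← Fintype.card_subtype, ← Nat.card_eq_fintype_card,
    card_pow_eq_and_zpowers_eq he (mem_filter.mp hx₀).2]

theorem exists_mem_zpowers_mul_pow_prime_pow_eq [Finite G] (k : ℕ) (a : G) :
    ∃ b ∈ zpowers a, ∃ c : G, (∃ E, c ^ p ^ E = 1) ∧ c * b ^ p ^ k = a := by
  set m := orderOf a
  set q := p ^ m.factorization p
  set m' := m / q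
  have hqm : q * m' = m := Nat.ordProj_mul_ordCompl_eq_self m p
  obtain ⟨u, v, huv⟩ : IsCoprime ((p ^ k : ℕ) : ℤ) (m' : ℤ) :=
    Nat.isCoprime_iff_coprime.mpr ((Nat.coprime_ordCompl hp.out (orderOf_pos a).ne').pow_left k)
  refine ⟨a ^ u, zpow_mem (mem_zpowers a) u, a ^ (v * m'), ⟨m.factorization p, ?_⟩, ?_⟩
  · rw [← zpow_natCast, ← zpow_mul, mul_assoc, ← Nat.cast_mul, mul_comm m', hqm, mul_comm,
      zpow_mul, zpow_natCast, pow_orderOf_eq_one, one_zpow]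
  · rw [← zpow_natCast, ← zpow_mul, ← zpow_add, add_comm, huv, zpow_one]

end PrimePower

theorem card_centralizer_lt_of_notMem_center {G : Type*} [Group G] [Finite G] {y : G}
    (hy : y ∉ center G) : Nat.card (centralizer {y}) < Nat.card G :=
  lt_of_le_of_ne (card_le_card_group _) fun h =>
    hy (centralizer_eq_top_iff_subset.mp ((card_eq_iff_eq_top _).mp h) rfl)

theorem coprime_rootCount_one {A : Type*} [CommGroup A] [Finite A] {p w : ℕ} [hp : Fact p.Prime]
    (hw : p.Coprime w) : p.Coprime (rootCount w (1 : A)) := by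
  rw [Nat.Prime.coprime_iff_not_dvd hp.out] at hw ⊢
  rw [rootCount_one_eq_card_ker]
  intro h
  obtain ⟨z, hz⟩ := exists_prime_orderOf_dvd_card' p h
  exact hw (hz ▸ orderOf_dvd_of_pow_eq_one (Subtype.ext z.2))

theorem sum_rootCount_filter_mem_center {G : Type*} [Group G] [Fintype G] [DecidableEq G]
    [DecidablePred (· ∈ center G)] {n w : ℕ} (hnw : n.Coprime w) :
    ∑ y ∈ {y : G | y ^ w = 1} with y ∈ center G, rootCount n y =
      rootCount w (1 : center G) * rootCount n (1 : G) := by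
  rw [sum_congr rfl fun y hy => ?_, sum_const, smul_eq_mul, filter_filter,
    ← Fintype.card_subtype, ← Nat.card_eq_fintype_card]
  · rw [show (1 : center G) = ⟨1, one_mem _⟩ from rfl, rootCount_mk]
    exact congrArg (· * _) (Nat.card_congr (Equiv.subtypeEquivRight fun _ => and_comm))
  · simp only [mem_filter, mem_univ, true_and] at hy
    exact rootCount_eq_rootCount_one_of_coprime hy.2
      (hnw.coprime_dvd_right (orderOf_dvd_of_pow_eq_one hy.1))

theorem gcd_prime_pow_card_dvd_rootCount_one_of_dvd {p j w : ℕ} [Fact p.Prime] (hw : p.Coprime w)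
    (G : Type u) [Group G] [Finite G] (hG : Nat.card G ∣ p ^ j * w) :
    (p ^ j).gcd (Nat.card G) ∣ rootCount (p ^ j) (1 : G) := by
  induction hn : Nat.card G using Nat.strong_induction_on generalizing G with
  | _ n ih =>
  subst hn
  have := Fintype.ofFinite G
  have := Classical.decEq G
  have := Classical.decPred (· ∈ center G)
  have hpj : (p ^ j).Coprime w := hw.pow_left j
  have hsum : Nat.card G = ∑ y : G with y ^ w = 1, rootCount (p ^ j) y := by
    rw [← rootCount_mul_eq_sum]
    exact (Nat.card_congr (Equiv.subtypeUnivEquiv fun x =>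
      orderOf_dvd_iff_pow_eq_one.mp ((orderOf_dvd_natCard x).trans hG))).symm
  rw [← sum_filter_add_sum_filter_not _ (· ∈ center G), sum_rootCount_filter_mem_center hpj]
    at hsum
  have hnoncentral : (p ^ j).gcd (Nat.card G) ∣
      ∑ y ∈ {y : G | y ^ w = 1} with y ∉ center G, rootCount (p ^ j) y := by
    refine gcd_card_dvd_sum_rootCount _ (fun g y hy => ?_) fun y hy => ?_
    · simp only [mem_filter, mem_univ, true_and] at hy ⊢
      refine ⟨by rw [conj_pow, hy.1, mul_one, mul_inv_cancel], fun h => hy.2 ?_⟩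
      simpa [mul_assoc] using (center G).normal_of_characteristic.conj_mem _ h g⁻¹
    · simp only [mem_filter, mem_univ, true_and] at hy
      rw [← rootCount_centralizer_mk, rootCount_eq_rootCount_one_of_coprime
        (mk_mem_center_centralizer y)
        (hpj.coprime_dvd_right (orderOf_dvd_of_pow_eq_one (Subtype.ext hy.1)))]
      exact ih _ (card_centralizer_lt_of_notMem_center hy.2) _
        ((card_subgroup_dvd_card _).trans hG) rfl
  have hcop : ((p ^ j).gcd (Nat.card G)).Coprime (rootCount w (1 : center G)) :=
    ((coprime_rootCount_one hw).pow_left j).coprime_dvd_left (Nat.gcd_dvd_left _ _)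
  exact hcop.dvd_of_dvd_mul_left <| (Nat.dvd_add_left hnoncentral).mp
    ((Nat.gcd_dvd_right _ _).trans (dvd_of_eq hsum))

theorem gcd_prime_pow_card_dvd_rootCount_one {G : Type*} [Group G] [Finite G] {p : ℕ}
    [hp : Fact p.Prime] (k : ℕ) : (p ^ k).gcd (Nat.card G) ∣ rootCount (p ^ k) (1 : G) := by
  classical
  have := Fintype.ofFinite G
  set β := (Nat.card G).factorization p
  have hG : Nat.card G ∣ p ^ (k + β) * (Nat.card G / p ^ β) := by
    rw [pow_add, mul_assoc, Nat.ordProj_mul_ordCompl_eq_self]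
    exact dvd_mul_left _ _
  have h := gcd_prime_pow_card_dvd_rootCount_one_of_dvd
    (Nat.coprime_ordCompl hp.out Nat.card_pos.ne') G hG
  have h1 : (1 : G) ∈ ({c : G | c ^ p ^ β = 1} : Finset G) := by simp
  rw [pow_add, rootCount_mul_eq_sum, ← add_sum_erase _ _ h1] at h
  have hrest : p ^ k ∣ ∑ c ∈ ({c : G | c ^ p ^ β = 1} : Finset G).erase 1, rootCount (p ^ k) c :=
    dvd_sum fun c hc =>
      prime_pow_dvd_rootCount k (ne_of_mem_erase hc) (mem_filter.mp (mem_of_mem_erase hc)).2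
  exact (Nat.dvd_add_left ((Nat.gcd_dvd_left _ _).trans hrest)).mp
    ((Nat.gcd_dvd_gcd_of_dvd_left _ (dvd_mul_right _ _)).trans h)

theorem gcd_prime_pow_card_dvd_rootCount_of_mem_center {G : Type*} [Group G] [Finite G] {p : ℕ}
    [Fact p.Prime] (k : ℕ) {a : G} (ha : a ∈ center G) :
    (p ^ k).gcd (Nat.card G) ∣ rootCount (p ^ k) a := by
  obtain ⟨b, hb, c, ⟨E, hcE⟩, rfl⟩ := exists_mem_zpowers_mul_pow_prime_pow_eq (p := p) k a
  rw [rootCount_mul_pow_of_mem_center (zpowers_le.mpr ha hb)]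
  rcases eq_or_ne c 1 with rfl | hc
  · exact gcd_prime_pow_card_dvd_rootCount_one k
  · exact (Nat.gcd_dvd_left _ _).trans (prime_pow_dvd_rootCount k hc hcE)

theorem gcd_card_centralizer_dvd_rootCount (r : ℕ) :
    ∀ (G : Type u) [Group G] [Finite G] (a : G),
      r.gcd (Nat.card (centralizer {a})) ∣ rootCount r a := by
  induction r using Nat.recOnPosPrimePosCoprime with
  | prime_pow p k hp _ =>
    have := Fact.mk hp
    exact fun G _ _ => gcd_card_centralizer_dvd_rootCount_of_forall_mem_center
      fun H _ _ _ hb => gcd_prime_pow_card_dvd_rootCount_of_mem_center k hb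
  | zero =>
    intro G _ _ a
    rcases eq_or_ne a 1 with rfl | ha
    · simpa [rootCount] using card_subgroup_dvd_card _
    · simp [rootCount, Ne.symm ha]
  | one => simp
  | coprime m n _ _ hmn ihm ihn =>
    refine fun G _ _ => gcd_card_centralizer_dvd_rootCount_of_forall_mem_center
      fun H _ _ b hb => ?_
    rw [Nat.gcd_comm, Nat.Coprime.gcd_mul _ hmn]
    refine Nat.Coprime.mul_dvd_of_dvd_of_dvd ?_ ?_ ?_
    · exact (hmn.coprime_dvd_left (Nat.gcd_dvd_right _ _)).coprime_dvd_right
        (Nat.gcd_dvd_right _ _)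
    · rw [Nat.gcd_comm]
      exact gcd_card_dvd_rootCount_mul_of_mem_center (ihm H) n hb
    · rw [Nat.gcd_comm, mul_comm]
      exact gcd_card_dvd_rootCount_mul_of_mem_center (ihn H) m hb

theorem stmt_5_general (G : Type*) [Group G] [Fintype G] (r : ℕ) (a : G) :
    Nat.gcd r (Nat.card (Subgroup.centralizer {a})) ∣
      Set.ncard {x : G | x ^ r = a} := by
  rw [← Nat.card_coe_set_eq]
  exact gcd_card_centralizer_dvd_rootCount r G a

theorem stmt_5 (G : Type*) [Group G] [Fintype G] (r : ℕ) (hr : 2 ≤ r) (a : G) :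
    Nat.gcd r (Nat.card (Subgroup.centralizer {a})) ∣
      Set.ncard {x : G | x ^ r = a} :=
  stmt_5_general G r a
end

section
/- Let $N$ be a normal subgroup of a finite group $G$ and $r \geq 2$. Then $\mathrm{Prob}_r(G) \leq \mathrm{Prob}_r(G/N)$, i.e., $|G^r|/|G| \leq |(G/N)^r|/|G/N|$. -/
lemma Subgroup.ncard_powers_le_card_mul_ncard_powers_quotient {G : Type*} [Group G] [Finite G]
    (N : Subgroup G) [N.Normal] (r : ℕ) :
    {x : G | ∃ g : G, g ^ r = x}.ncard ≤ Nat.card N * {x : G ⧸ N | ∃ g : G ⧸ N, g ^ r = x}.ncard :=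
  calc {x : G | ∃ g : G, g ^ r = x}.ncard
      ≤ (QuotientGroup.mk ⁻¹' {x : G ⧸ N | ∃ g : G ⧸ N, g ^ r = x} : Set G).ncard :=
        Set.ncard_le_ncard (fun _ ⟨g, hg⟩ => ⟨g, by rw [← hg]; rfl⟩) (Set.toFinite _)
    _ = Nat.card N * {x : G ⧸ N | ∃ g : G ⧸ N, g ^ r = x}.ncard := by
        rw [← Nat.card_coe_set_eq, QuotientGroup.card_preimage_mk, Nat.card_coe_set_eq]

theorem stmt_12_general (G : Type*) [Group G] [Fintype G] (N : Subgroup G) [N.Normal]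
    (r : ℕ) :
    (Set.ncard {x : G | ∃ g : G, g ^ r = x} : ℝ) / (Nat.card G : ℝ) ≤
      (Set.ncard {x : G ⧸ N | ∃ g : G ⧸ N, g ^ r = x} : ℝ) / (Nat.card (G ⧸ N) : ℝ) := by
  have hN : (0 : ℝ) < Nat.card N := by exact_mod_cast Nat.card_pos
  rw [Subgroup.card_eq_card_quotient_mul_card_subgroup N, Nat.cast_mul, mul_comm, ← div_div,
    div_le_div_iff_of_pos_right (by exact_mod_cast Nat.card_pos), div_le_iff₀' hN]
  exact_mod_cast N.ncard_powers_le_card_mul_ncard_powers_quotient r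

theorem stmt_12 (G : Type*) [Group G] [Fintype G] (N : Subgroup G) [N.Normal]
    (r : ℕ) (hr : 2 ≤ r) :
    (Set.ncard {x : G | ∃ g : G, g ^ r = x} : ℝ) / (Nat.card G : ℝ) ≤
      (Set.ncard {x : G ⧸ N | ∃ g : G ⧸ N, g ^ r = x} : ℝ) / (Nat.card (G ⧸ N) : ℝ) :=
  stmt_12_general G N r
end

section
/- Let $G$ be a finite solvable group, $p$ a prime, and $P$ a Sylow $p$-subgroup of $G$. Then $\mathrm{Prob}_p(G) \geq 1/|P|$, i.e., $|G^p| \geq |G|/|P|$. -/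
universe u

private lemma conj_pow_aux {G : Type*} [Group G] (g x : G) (e : ℕ) :
    (g * x * g⁻¹) ^ e = g * x ^ e * g⁻¹ := by
  induction e with
  | zero => simp
  | succ n ih => rw [pow_succ, pow_succ, ih]; group

/-- Special case of Hall's theorem: a finite solvable group has a subgroup of order
the p'-part of the group order (a p-complement). -/
private lemma exists_hall_compl (p : ℕ) [hp : Fact p.Prime] :
    ∀ n : ℕ, ∀ (G : Type u) [Group G] [Finite G] [Group.IsSolvable G], Nat.card G = n →
      ∃ H : Subgroup G, Nat.card H = ordCompl[p] (Nat.card G) := by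
  intro n
  induction n using Nat.strong_induction_on with
  | _ n ih =>
  intro G _ _ _ hn
  classical
  rcases subsingleton_or_nontrivial G with hs | hs
  · refine ⟨⊥, ?_⟩
    have h1 : Nat.card G = 1 :=
      Nat.card_eq_one_iff_unique.mpr ⟨⟨fun a b => Subsingleton.elim a b⟩, ⟨1⟩⟩
    rw [Subgroup.card_bot, h1]
    simp
  -- pick the last nontrivial derived series term N
  have hsolv : ∃ m, derivedSeries G m = ⊥ := Group.IsSolvable.solvable
  set m := Nat.find hsolv with hmdef
  have hm : derivedSeries G m = ⊥ := Nat.find_spec hsolv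
  have hm0 : m ≠ 0 := by
    intro h
    rw [h, derivedSeries_zero] at hm
    exact top_ne_bot hm
  set N : Subgroup G := derivedSeries G (m - 1) with hNdef
  have hNne : N ≠ ⊥ := Nat.find_min hsolv (Nat.sub_lt (Nat.pos_of_ne_zero hm0) one_pos)
  have hNcomm : ∀ x ∈ N, ∀ y ∈ N, Commute x y := by
    intro x hx y hy
    have hcomm : ⁅N, N⁆ ≤ ⊥ := by
      have h1 : derivedSeries G (m - 1 + 1) = ⁅N, N⁆ := derivedSeries_succ G (m - 1)
      rw [Nat.sub_add_cancel (Nat.pos_of_ne_zero hm0)] at h1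
      rw [← h1, hm]
    have h2 := Subgroup.commutator_le.mp hcomm x hx y hy
    rw [Subgroup.mem_bot] at h2
    exact commutatorElement_eq_one_iff_commute.mp h2
  haveI hNnorm : N.Normal := derivedSeries_normal G (m - 1)
  -- q and the exponent k
  have hNcard : 1 < Nat.card N := (Subgroup.one_lt_card_iff_ne_bot N).mpr hNne
  set q : ℕ := (Nat.card N).minFac with hqdef
  have hq : q.Prime := Nat.minFac_prime (by omega)
  have hqdvd : q ∣ Nat.card N := Nat.minFac_dvd _
  set k : ℕ := (Nat.card N).factorization q with hkdef
  have hk1 : 1 ≤ k := hq.factorization_pos_of_dvd (by omega) hqdvd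
  -- the q-primary part M of N
  set M : Subgroup G :=
    { carrier := {x | x ∈ N ∧ x ^ q ^ k = 1}
      one_mem' := ⟨N.one_mem, one_pow _⟩
      mul_mem' := fun {a b} ha hb => ⟨N.mul_mem ha.1 hb.1, by
        rw [(hNcomm a ha.1 b hb.1).mul_pow, ha.2, hb.2, one_mul]⟩
      inv_mem' := fun {a} ha => ⟨N.inv_mem ha.1, by rw [inv_pow, ha.2, inv_one]⟩ } with hMdef
  have hMmem : ∀ x : G, x ∈ M ↔ x ∈ N ∧ x ^ q ^ k = 1 := fun x => Iff.rfl
  haveI hMnorm : M.Normal := by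
    constructor
    intro x hx g
    refine ⟨hNnorm.conj_mem x hx.1 g, ?_⟩
    rw [conj_pow_aux, hx.2, mul_one, mul_inv_cancel]
  haveI hqfact : Fact q.Prime := ⟨hq⟩
  have hMpgroup : IsPGroup q M := fun x =>
    ⟨k, Subtype.ext (by simpa using x.2.2)⟩
  obtain ⟨j, hMcard⟩ := IsPGroup.iff_card.mp hMpgroup
  -- M is nontrivial: Cauchy on N
  have hMnontriv : 1 < Nat.card M := by
    haveI : Fintype N := Fintype.ofFinite N
    obtain ⟨x, hx⟩ := exists_prime_orderOf_dvd_card (G := N) q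
      (by rwa [← Nat.card_eq_fintype_card])
    have hxG : orderOf (x : G) = q := by rw [Subgroup.orderOf_coe]; exact hx
    have hxM : (x : G) ∈ M := by
      refine ⟨x.2, ?_⟩
      have hdd : orderOf (x : G) ∣ q ^ k := by
        rw [hxG]; exact dvd_pow_self q (Nat.one_le_iff_ne_zero.mp hk1)
      exact orderOf_dvd_iff_pow_eq_one.mp hdd
    have hxne : (x : G) ≠ 1 := by
      intro h
      rw [h, orderOf_one] at hxG
      exact hq.one_lt.ne' hxG.symm
    rw [Finite.one_lt_card_iff_nontrivial]
    exact ⟨⟨⟨(x : G), hxM⟩, 1, by simp [Subtype.ext_iff, hxne]⟩⟩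
  -- pass to the quotient
  have hGcard : Nat.card G = Nat.card (G ⧸ M) * Nat.card M :=
    Subgroup.card_eq_card_quotient_mul_card_subgroup M
  have hQpos : 0 < Nat.card (G ⧸ M) := Nat.card_pos
  have hQlt : Nat.card (G ⧸ M) < n := by
    rw [← hn, hGcard]
    nlinarith
  obtain ⟨H', hH'⟩ := ih (Nat.card (G ⧸ M)) hQlt (G ⧸ M) rfl
  -- the pullback K
  set K : Subgroup G := H'.comap (QuotientGroup.mk' M) with hKdef
  have hKindex : K.index = H'.index :=
    H'.index_comap_of_surjective (QuotientGroup.mk'_surjective M)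
  have hKcard : Nat.card K = Nat.card M * Nat.card H' := by
    have h1 : Nat.card K * K.index = Nat.card G := Subgroup.card_mul_index K
    have h2 : Nat.card H' * H'.index = Nat.card (G ⧸ M) := Subgroup.card_mul_index H'
    have hipos : 0 < H'.index := Nat.pos_of_ne_zero H'.index_ne_zero_of_finite
    have h3 : Nat.card K * H'.index = (Nat.card M * Nat.card H') * H'.index := by
      rw [← hKindex, h1, hGcard, ← h2, hKindex]
      ring
    exact Nat.eq_of_mul_eq_mul_right hipos h3
  have hQne : Nat.card (G ⧸ M) ≠ 0 := hQpos.ne'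
  by_cases hqp : q = p
  · -- q = p : Schur-Zassenhaus inside K
    rw [hqp] at hMcard
    have hMK : M ≤ K := by
      intro x hx
      show QuotientGroup.mk' M x ∈ H'
      have : QuotientGroup.mk' M x = 1 := (QuotientGroup.eq_one_iff x).mpr hx
      rw [this]; exact H'.one_mem
    set N' : Subgroup K := M.subgroupOf K with hN'def
    haveI : N'.Normal := hMnorm.subgroupOf K
    have hN'card : Nat.card N' = Nat.card M :=
      Nat.card_congr (Subgroup.subgroupOfEquivOfLe hMK).toEquiv
    have hMpos : 0 < Nat.card M := Nat.card_pos
    have hN'index : N'.index = Nat.card H' := by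
      have h1 : Nat.card N' * N'.index = Nat.card K := Subgroup.card_mul_index N'
      rw [hN'card, hKcard] at h1
      exact Nat.eq_of_mul_eq_mul_left hMpos h1
    have hcop : (Nat.card N').Coprime N'.index := by
      rw [hN'card, hMcard, hN'index, hH']
      exact Nat.Coprime.pow_left j
        (hp.out.coprime_iff_not_dvd.mpr (Nat.not_dvd_ordCompl hp.out hQne))
    obtain ⟨H₀, hcomp⟩ := Subgroup.exists_right_complement'_of_coprime hcop
    have hH₀card : Nat.card H₀ = Nat.card H' := by
      have h1 : Nat.card N' * Nat.card H₀ = Nat.card K := hcomp.card_mul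
      rw [hN'card, hKcard] at h1
      exact Nat.eq_of_mul_eq_mul_left hMpos h1
    refine ⟨H₀.map K.subtype, ?_⟩
    have hcardmap : Nat.card (H₀.map K.subtype) = Nat.card H₀ :=
      (Nat.card_congr (Subgroup.equivMapOfInjective H₀ K.subtype K.subtype_injective).toEquiv).symm
    rw [hcardmap, hH₀card, hH', hGcard, Nat.ordCompl_mul]
    have : ordCompl[p] (Nat.card M) = 1 := by
      rw [hMcard, hp.out.factorization_pow, Finsupp.single_eq_same, Nat.div_self]
      exact pow_pos hp.out.pos j
    rw [this, mul_one]
  · -- q ≠ p : K itself works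
    refine ⟨K, ?_⟩
    have hpM : ¬ p ∣ Nat.card M := by
      rw [hMcard]
      intro hdvd
      exact hqp ((Nat.prime_dvd_prime_iff_eq hp.out hq).mp (hp.out.dvd_of_dvd_pow hdvd)).symm
    have hMcompl : ordCompl[p] (Nat.card M) = Nat.card M := by
      rw [Nat.factorization_eq_zero_of_not_dvd hpM, pow_zero, Nat.div_one]
    rw [hKcard, hGcard, Nat.ordCompl_mul, hMcompl, hH', mul_comm]

theorem stmt_16 (G : Type*) [Group G] [Fintype G] [Group.IsSolvable G] (p : ℕ) [Fact p.Prime]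
    (P : Sylow p G) :
    (1 : ℝ) / (Nat.card P : ℝ) ≤
      (Set.ncard {x : G | ∃ g : G, g ^ p = x} : ℝ) / (Nat.card G : ℝ) := by
  obtain ⟨H, hH⟩ := exists_hall_compl p (Nat.card G) G rfl
  -- every element of H is a p-th power
  have hsub : (H : Set G) ⊆ {x : G | ∃ g : G, g ^ p = x} := by
    intro h hh
    have hord : orderOf h ∣ Nat.card H := H.orderOf_dvd_natCard hh
    have hnd : ¬ p ∣ orderOf h := by
      intro hdvd
      exact Nat.not_dvd_ordCompl (Fact.out) (Nat.card_pos (α := G)).ne'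
        (hH ▸ hdvd.trans hord)
    have hcop : p.Coprime (orderOf h) := (Fact.out : p.Prime).coprime_iff_not_dvd.mpr hnd
    have htot : 1 ≤ (orderOf h).totient := Nat.totient_pos.mpr (orderOf_pos h)
    refine ⟨h ^ p ^ ((orderOf h).totient - 1), ?_⟩
    rw [← pow_mul, ← pow_succ, Nat.sub_add_cancel htot]
    calc h ^ p ^ (orderOf h).totient = h ^ 1 := by
          rw [pow_eq_pow_iff_modEq]
          exact Nat.ModEq.pow_totient hcop
      _ = h := pow_one h
  -- counting
  have hfin : {x : G | ∃ g : G, g ^ p = x}.Finite := Set.finite_univ.subset (Set.subset_univ _)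
  have hcard1 : (H : Set G).ncard = Nat.card H := by
    rw [← Nat.card_coe_set_eq, SetLike.coe_sort_coe]
  have hle : Nat.card H ≤ {x : G | ∃ g : G, g ^ p = x}.ncard := by
    rw [← hcard1]
    exact Set.ncard_le_ncard hsub hfin
  have hPcard : Nat.card P = p ^ (Nat.card G).factorization p := P.card_eq_multiplicity
  have hmul : Nat.card P * Nat.card H = Nat.card G := by
    rw [hPcard, hH]
    exact Nat.ordProj_mul_ordCompl_eq_self (Nat.card G) p
  have hPpos : 0 < Nat.card P := Nat.card_pos
  have hGpos : 0 < Nat.card G := Nat.card_pos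
  rw [div_le_div_iff₀ (by exact_mod_cast hPpos) (by exact_mod_cast hGpos)]
  calc (1 : ℝ) * Nat.card G = (Nat.card P : ℝ) * Nat.card H := by
        rw [one_mul]; exact_mod_cast hmul.symm
    _ ≤ (Set.ncard {x : G | ∃ g : G, g ^ p = x} : ℝ) * Nat.card P := by
        have h1 : (Nat.card H : ℝ) ≤ (Set.ncard {x : G | ∃ g : G, g ^ p = x} : ℝ) := by
          exact_mod_cast hle
        have h2 : (0 : ℝ) ≤ (Nat.card P : ℝ) := by positivity
        nlinarith
end
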